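/- arXiv:2311.04463 — 3 statements merged into one kernel-verified Lean document; each statement's English description precedes it below -/
import Mathlib

section
/- Let G be a divisor of a function field F/F_q with ℓ(G) > 0, and let b_1,…,b_t ∈ L(G) be a spanning set for L(G). Then the floor of G satisfies ⌊G⌋ = −gcd( (b_i) : i = 1,…,t ), where (b_i) is the principal divisor of b_i. -/
/-- An abstract algebraic function field `F` over the constant field `K`,
together with its places, normalized valuations, principal divisors,
genus and Riemann–Roch spaces. Divisors are finitely supported
functions `Place →₀ ℤ`. -/
structure FnField (K F : Type*) [Field K] [Field F] [Algebra K F]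
    (Place : Type*) where
  /-- the degree of a place -/
  degPlace : Place → ℕ
  degPlace_pos : ∀ P, 0 < degPlace P
  /-- the normalized discrete valuation attached to a place -/
  v : Place → F → ℤ
  v_zero : ∀ P, v P (0 : F) = 0
  v_mul : ∀ (P : Place) (a b : F), a ≠ 0 → b ≠ 0 → v P (a * b) = v P a + v P b
  v_add : ∀ (P : Place) (a b : F), a ≠ 0 → b ≠ 0 → a + b ≠ 0 →
    min (v P a) (v P b) ≤ v P (a + b)
  v_const : ∀ (P : Place) (c : K), c ≠ 0 → v P (algebraMap K F c) = 0
  /-- the principal divisor of a (nonzero) element -/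
  prin : F → (Place →₀ ℤ)
  prin_apply : ∀ z : F, z ≠ 0 → ∀ P, prin z P = v P z
  /-- the genus of `F/K` -/
  genus : ℕ
  /-- the Riemann–Roch space of a divisor, `L(G) = {z ≠ 0 : (z) ≥ -G} ∪ {0}` -/
  RR : (Place →₀ ℤ) → Submodule K F
  mem_RR : ∀ (G : Place →₀ ℤ) (z : F), z ∈ RR G ↔ z = 0 ∨ ∀ P, -(G P) ≤ v P z
  RR_fin : ∀ G, FiniteDimensional K (RR G)

namespace FnField

variable {K F Place : Type*} [Field K] [Field F] [Algebra K F]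

/-- The degree of a divisor. -/
def degDiv (FF : FnField K F Place) (G : Place →₀ ℤ) : ℤ :=
  G.sum fun P a => a * (FF.degPlace P : ℤ)

/-- `ℓ(G)`, the dimension of the Riemann–Roch space of `G`. -/
noncomputable def ell (FF : FnField K F Place) (G : Place →₀ ℤ) : ℕ :=
  Module.finrank K (FF.RR G)

/-- `i(G) = ℓ(G) - deg G + g - 1`, the index of specialty of `G`. -/
noncomputable def iSpec (FF : FnField K F Place) (G : Place →₀ ℤ) : ℤ :=
  (FF.ell G : ℤ) - FF.degDiv G + (FF.genus : ℤ) - 1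

end FnField

/-- `Gf` is the floor of the divisor `G`: the divisor of minimum degree with
`L(Gf) = L(G)`. -/
def FnField.IsFloor {K F Place : Type*} [Field K] [Field F] [Algebra K F]
    (FF : FnField K F Place) (G Gf : Place →₀ ℤ) : Prop :=
  FF.RR Gf = FF.RR G ∧ ∀ G' : Place →₀ ℤ, FF.RR G' = FF.RR G → FF.degDiv Gf ≤ FF.degDiv G'

lemma FnField.val_sum_ge {K F Place : Type*} [Field K] [Field F] [Algebra K F]
    (FF : FnField K F Place) (P : Place) {ι : Type*} [DecidableEq ι]
    (s : Finset ι) (f : ι → F) (m : ℤ) :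
    (∀ i ∈ s, f i ≠ 0) → (∑ i ∈ s, f i) ≠ 0 → (∀ i ∈ s, m ≤ FF.v P (f i)) →
    m ≤ FF.v P (∑ i ∈ s, f i) := by
  induction s using Finset.induction_on with
  | empty => intro _ hs _; simp at hs
  | @insert a s ha ih =>
    intro hf hs hm
    rw [Finset.sum_insert ha] at hs ⊢
    by_cases h0 : ∑ i ∈ s, f i = 0
    · rw [h0, add_zero]
      exact hm a (Finset.mem_insert_self a s)
    · have h1 : m ≤ FF.v P (∑ i ∈ s, f i) :=
        ih (fun i hi => hf i (Finset.mem_insert_of_mem hi)) h0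
          (fun i hi => hm i (Finset.mem_insert_of_mem hi))
      have h2 := FF.v_add P (f a) (∑ i ∈ s, f i)
        (hf a (Finset.mem_insert_self a s)) h0 hs
      exact le_trans (le_min (hm a (Finset.mem_insert_self a s)) h1) h2

lemma FnField.degDiv_mono {K F Place : Type*} [Field K] [Field F] [Algebra K F]
    (FF : FnField K F Place) {D D' : Place →₀ ℤ} (h : ∀ P, D P ≤ D' P) :
    FF.degDiv D ≤ FF.degDiv D' := by
  classical
  unfold FnField.degDiv
  rw [Finsupp.sum_of_support_subset D (Finset.subset_union_left (s₂ := D'.support))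
      (fun P a => a * (FF.degPlace P : ℤ)) (by intros; simp),
    Finsupp.sum_of_support_subset D' (Finset.subset_union_right (s₁ := D.support))
      (fun P a => a * (FF.degPlace P : ℤ)) (by intros; simp)]
  refine Finset.sum_le_sum fun P _ => ?_
  exact mul_le_mul_of_nonneg_right (h P) (by positivity)

/-- (Maharaj)  Let `G` be a divisor with `ℓ(G) > 0` and let
`b_1, …, b_t ∈ L(G)` be a spanning set of `L(G)`.  Then
`⌊G⌋ = -gcd((b_i) : i = 1, …, t)`, where the gcd of divisors is the pointwise
minimum. -/
theorem floor_eq_neg_gcd_of_spanning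
    {K F Place : Type*} [Field K] [Fintype K] [Field F] [Algebra K F]
    (FF : FnField K F Place)
    (G : Place →₀ ℤ) (hG : 0 < FF.ell G)
    {t : ℕ} (ht : (Finset.univ : Finset (Fin t)).Nonempty)
    (b : Fin t → F) (hb0 : ∀ i, b i ≠ 0) (hbG : ∀ i, b i ∈ FF.RR G)
    (hspan : Submodule.span K (Set.range b) = FF.RR G)
    (Ggcd : Place →₀ ℤ)
    (hgcd : ∀ Q, Ggcd Q = Finset.univ.inf' ht fun i => FF.prin (b i) Q) :
    FF.IsFloor G (-Ggcd) := by
  classical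
  -- values of basis elements
  have hv : ∀ i P, Ggcd P ≤ FF.v P (b i) := by
    intro i P
    rw [hgcd P]
    have := Finset.inf'_le (b := i) (fun i => FF.prin (b i) P) (Finset.mem_univ i)
    rwa [FF.prin_apply (b i) (hb0 i) P] at this
  have hlow : ∀ P, -(G P) ≤ Ggcd P := by
    intro P
    rw [hgcd P]
    refine Finset.le_inf' ht _ fun i _ => ?_
    rw [FF.prin_apply (b i) (hb0 i) P]
    rcases (FF.mem_RR G (b i)).mp (hbG i) with h | h
    · exact absurd h (hb0 i)
    · exact h P
  -- key: every nonzero z in RR G has v P z ≥ Ggcd P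
  have key : ∀ z : F, z ∈ FF.RR G → z ≠ 0 → ∀ P, Ggcd P ≤ FF.v P z := by
    intro z hz hz0 P
    rw [← hspan] at hz
    obtain ⟨c, hc⟩ := (Submodule.mem_span_range_iff_exists_fun K).mp hz
    have hzsum : z = ∑ i ∈ Finset.univ.filter (fun i => c i ≠ 0), c i • b i := by
      rw [← hc]
      refine (Finset.sum_subset (Finset.filter_subset _ _) ?_).symm
      intro i _ hi
      simp only [Finset.mem_filter, Finset.mem_univ, true_and, not_not] at hi
      rw [hi, zero_smul]
    have hval : ∀ i ∈ Finset.univ.filter (fun i => c i ≠ 0),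
        FF.v P (c i • b i) = FF.v P (b i) := by
      intro i hi
      simp only [Finset.mem_filter, Finset.mem_univ, true_and] at hi
      rw [Algebra.smul_def, FF.v_mul P _ _ ((map_ne_zero _).mpr hi) (hb0 i),
        FF.v_const P (c i) hi, zero_add]
    rw [hzsum]
    refine FF.val_sum_ge P _ _ _ ?_ ?_ ?_
    · intro i hi
      simp only [Finset.mem_filter, Finset.mem_univ, true_and] at hi
      exact smul_ne_zero hi (hb0 i)
    · rw [← hzsum]; exact hz0
    · intro i hi
      rw [hval i hi]
      exact hv i P
  have hRReq : FF.RR (-Ggcd) = FF.RR G := by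
    ext z
    rw [FF.mem_RR, FF.mem_RR]
    constructor
    · rintro (rfl | h)
      · exact Or.inl rfl
      · refine Or.inr fun P => le_trans (hlow P) ?_
        have := h P
        rwa [Finsupp.neg_apply, neg_neg] at this
    · rintro (rfl | h)
      · exact Or.inl rfl
      · by_cases hz0 : z = 0
        · exact Or.inl hz0
        · refine Or.inr fun P => ?_
          rw [Finsupp.neg_apply, neg_neg]
          exact key z ((FF.mem_RR G z).mpr (Or.inr h)) hz0 P
  refine ⟨hRReq, fun G' hG' => ?_⟩
  refine FF.degDiv_mono fun P => ?_
  rw [Finsupp.neg_apply, neg_le]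
  rw [hgcd P]
  refine Finset.le_inf' ht _ fun i _ => ?_
  rw [FF.prin_apply (b i) (hb0 i) P]
  have : b i ∈ FF.RR G' := hG' ▸ hbG i
  rcases (FF.mem_RR G' (b i)).mp this with h | h
  · exact absurd h (hb0 i)
  · exact h P
end

section
/- Let F/F_q be an algebraic function field, let B and Z be divisors with L(B) = L(B + Z), and let D' be an effective divisor whose support is disjoint from the supports of B and Z. Then ℓ(B + Z − D') ≤ ℓ(B − D'). -/
/-- If `L(B) = L(B + Z)` and `D'` is an effective divisor whose
support is disjoint from the supports of `B` and `Z`, then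
`ℓ(B + Z - D') ≤ ℓ(B - D')`. -/
theorem ell_add_sub_le_of_RR_eq
    {K F Place : Type*} [Field K] [Fintype K] [Field F] [Algebra K F]
    (FF : FnField K F Place)
    (B Z D' : Place →₀ ℤ)
    (hBZ : FF.RR B = FF.RR (B + Z))
    (hD'eff : ∀ Q, 0 ≤ D' Q)
    (hdisj : ∀ Q, D' Q ≠ 0 → B Q = 0 ∧ Z Q = 0) :
    FF.ell (B + Z - D') ≤ FF.ell (B - D') := by
  have hle : FF.RR (B + Z - D') ≤ FF.RR (B - D') := by
    intro z hz
    rw [FF.mem_RR] at hz ⊢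
    rcases hz with rfl | hz
    · exact Or.inl rfl
    · have hzBZ : z ∈ FF.RR (B + Z) := by
        rw [FF.mem_RR]
        right
        intro P
        refine le_trans ?_ (hz P)
        simp only [Finsupp.coe_sub, Finsupp.coe_add, Pi.sub_apply, Pi.add_apply, neg_le_neg_iff]
        have := hD'eff P
        omega
      rw [← hBZ, FF.mem_RR] at hzBZ
      rcases hzBZ with rfl | hzB
      · exact Or.inl rfl
      · right
        intro P
        by_cases hP : D' P = 0
        · have := hzB P
          simp only [Finsupp.coe_sub, Pi.sub_apply, hP]
          omega
        · have hZ := (hdisj P hP).2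
          have := hz P
          simp only [Finsupp.coe_sub, Finsupp.coe_add, Pi.sub_apply, Pi.add_apply, hZ] at this ⊢
          omega
  have := FF.RR_fin (B - D')
  exact Submodule.finrank_mono hle
end

section
/- Let F/F_q be an algebraic function field, let B and C be divisors with L(B) ⊆ L(C), and let D' be an effective divisor whose support is disjoint from the supports of B and C. Then ℓ(B − D') ≤ ℓ(C − D'). -/
/-- If `L(B) ⊆ L(C)` and `D'` is an effective divisor whose
support is disjoint from the supports of `B` and `C`, then
`ℓ(B - D') ≤ ℓ(C - D')`. -/
theorem ell_sub_le_of_RR_le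
    {K F Place : Type*} [Field K] [Fintype K] [Field F] [Algebra K F]
    (FF : FnField K F Place)
    (B C D' : Place →₀ ℤ)
    (hBC : FF.RR B ≤ FF.RR C)
    (hD'eff : ∀ Q, 0 ≤ D' Q)
    (hdisj : ∀ Q, D' Q ≠ 0 → B Q = 0 ∧ C Q = 0) :
    FF.ell (B - D') ≤ FF.ell (C - D') := by
  have hle : FF.RR (B - D') ≤ FF.RR (C - D') := by
    intro z hz
    rw [FF.mem_RR] at hz ⊢
    rcases hz with rfl | hz
    · exact Or.inl rfl
    · by_cases hz0 : z = 0
      · exact Or.inl hz0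
      right
      have hzB : z ∈ FF.RR B := by
        rw [FF.mem_RR]
        right
        intro P
        have := hz P
        have h0 := hD'eff P
        simp only [Finsupp.sub_apply] at this
        omega
      have hzC := hBC hzB
      rw [FF.mem_RR] at hzC
      intro P
      simp only [Finsupp.sub_apply]
      by_cases hP : D' P = 0
      · rcases hzC with rfl | hzC
        · exact absurd rfl hz0
        · have := hzC P; omega
      · obtain ⟨hB0, hC0⟩ := hdisj P hP
        have := hz P
        simp only [Finsupp.sub_apply] at this
        omega
  haveI := FF.RR_fin (C - D')
  exact Submodule.finrank_mono hle
end
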